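/- arXiv:1804.03931 — 5 statements merged into one kernel-verified Lean document; each statement's English description precedes it below -/
import Mathlib

section
/- For every y > 0, real numbers a < b, and t ∈ ℝ, one has 0 < arctan((b−t)/y) − arctan((a−t)/y); moreover this difference is at most π when a−1 ≤ t ≤ b+1, and is at most y·(b−a+1+a²+b²)/(1+t²) when t ∉ [a−1, b+1]. -/
open Real

lemma my_arctan_le_self {x : ℝ} (hx : 0 ≤ x) : Real.arctan x ≤ x := by
  have h := Real.le_tan (x := Real.arctan x)
    (by simpa using Real.arctan_strictMono.monotone hx) (Real.arctan_lt_pi_div_two x)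
  rwa [Real.tan_arctan] at h

theorem stmt_3 (y a b t : ℝ) (hy : 0 < y) (hab : a < b) :
    0 < Real.arctan ((b - t) / y) - Real.arctan ((a - t) / y) ∧
    (t ∈ Set.Icc (a - 1) (b + 1) →
      Real.arctan ((b - t) / y) - Real.arctan ((a - t) / y) ≤ Real.pi) ∧
    (t ∉ Set.Icc (a - 1) (b + 1) →
      Real.arctan ((b - t) / y) - Real.arctan ((a - t) / y) ≤
        y * (b - a + 1 + a ^ 2 + b ^ 2) / (1 + t ^ 2)) := by
  refine ⟨?_, ?_, ?_⟩
  · have : (a - t) / y < (b - t) / y := by gcongr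
    have := Real.arctan_strictMono this
    linarith
  · intro _
    have h1 := Real.arctan_lt_pi_div_two ((b - t) / y)
    have h2 := Real.neg_pi_div_two_lt_arctan ((a - t) / y)
    linarith
  · intro ht
    simp only [Set.mem_Icc, not_and_or, not_le] at ht
    have hP : 0 < (a - t) * (b - t) := by
      rcases ht with h | h
      · nlinarith
      · nlinarith
    have hy2 : (0:ℝ) < y ^ 2 := by positivity
    have hD : 0 < y ^ 2 + (a - t) * (b - t) := by linarith
    have huv : ((b - t) / y) * (-((a - t) / y)) < 1 := by
      have : ((b - t) / y) * (-((a - t) / y)) = -((a - t) * (b - t)) / y ^ 2 := by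
        field_simp
      rw [this]
      have : -((a - t) * (b - t)) / y ^ 2 < 0 := by
        apply div_neg_of_neg_of_pos <;> [linarith; positivity]
      linarith
    have hf := Real.arctan_add huv
    rw [Real.arctan_neg] at hf
    have harg : ((b - t) / y + -((a - t) / y)) / (1 - (b - t) / y * -((a - t) / y))
        = (b - a) * y / (y ^ 2 + (a - t) * (b - t)) := by
      rw [div_eq_div_iff (sub_pos.mpr huv).ne' hD.ne']
      field_simp
      ring
    have heq : Real.arctan ((b - t) / y) - Real.arctan ((a - t) / y)
        = Real.arctan ((b - a) * y / (y ^ 2 + (a - t) * (b - t))) := by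
      rw [← harg, ← hf]; ring
    rw [heq]
    have hXnn : 0 ≤ (b - a) * y / (y ^ 2 + (a - t) * (b - t)) := by
      apply div_nonneg (by nlinarith) hD.le
    refine (my_arctan_le_self hXnn).trans ?_
    rw [div_le_div_iff₀ hD (by positivity)]
    have key : (b - a) * (1 + t ^ 2) ≤ (b - a + 1 + a ^ 2 + b ^ 2) * (y ^ 2 + (a - t) * (b - t)) := by
      have hS : (0:ℝ) ≤ b - a + 1 + a ^ 2 + b ^ 2 := by nlinarith
      have hy2S : 0 ≤ (b - a + 1 + a ^ 2 + b ^ 2) * y ^ 2 := mul_nonneg hS hy2.le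
      rcases ht with h | h
      · have hp : (0:ℝ) ≤ a - t := by linarith
        have hp1 : (0:ℝ) ≤ a - 1 - t := by linarith
        nlinarith [mul_nonneg hp (sq_nonneg b), mul_nonneg hp1 (mul_nonneg hp (sq_nonneg b)),
          mul_nonneg (mul_nonneg hp1 (sub_pos.mpr hab).le) (sq_nonneg a),
          mul_nonneg hp1 (sub_pos.mpr hab).le, mul_nonneg hp1 hp,
          mul_nonneg (mul_nonneg hp1 hp) (sub_pos.mpr hab).le]
      · have hp : (0:ℝ) ≤ t - b := by linarith
        have hp1 : (0:ℝ) ≤ t - b - 1 := by linarith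
        nlinarith [mul_nonneg hp (sq_nonneg a), mul_nonneg hp1 (mul_nonneg hp (sq_nonneg a)),
          mul_nonneg (mul_nonneg hp1 (sub_pos.mpr hab).le) (sq_nonneg b),
          mul_nonneg hp1 (sub_pos.mpr hab).le, mul_nonneg hp1 hp,
          mul_nonneg (mul_nonneg hp1 hp) (sub_pos.mpr hab).le]
    calc (b - a) * y * (1 + t ^ 2) = y * ((b - a) * (1 + t ^ 2)) := by ring
      _ ≤ y * ((b - a + 1 + a ^ 2 + b ^ 2) * (y ^ 2 + (a - t) * (b - t))) :=
          mul_le_mul_of_nonneg_left key hy.le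
      _ = y * (b - a + 1 + a ^ 2 + b ^ 2) * (y ^ 2 + (a - t) * (b - t)) := by ring
end

section
/- Let a < b be real and t ∈ ℝ. Then lim_{y↓0} (arctan((b−t)/y) − arctan((a−t)/y)) equals 0 if t < a or t > b, equals π/2 if t = a or t = b, and equals π if a < t < b. -/
open Filter

lemma aux_pos (c : ℝ) (hc : 0 < c) :
    Tendsto (fun y : ℝ => Real.arctan (c / y)) (nhdsWithin 0 (Set.Ioi 0))
      (nhds (Real.pi / 2)) := by
  have h1 : Tendsto (fun y : ℝ => c / y) (nhdsWithin 0 (Set.Ioi 0)) atTop := by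
    simpa [div_eq_mul_inv] using (tendsto_inv_nhdsGT_zero.const_mul_atTop hc)
  exact (Real.tendsto_arctan_atTop.mono_right nhdsWithin_le_nhds).comp h1

lemma aux_neg (c : ℝ) (hc : c < 0) :
    Tendsto (fun y : ℝ => Real.arctan (c / y)) (nhdsWithin 0 (Set.Ioi 0))
      (nhds (-(Real.pi / 2))) := by
  have h1 : Tendsto (fun y : ℝ => c / y) (nhdsWithin 0 (Set.Ioi 0)) atBot := by
    have := (tendsto_inv_nhdsGT_zero.const_mul_atTop (neg_pos.mpr hc) :
      Tendsto (fun y : ℝ => (-c) * y⁻¹) (nhdsWithin 0 (Set.Ioi 0)) atTop)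
    have := tendsto_neg_atTop_atBot.comp this
    simpa [div_eq_mul_inv, Function.comp_def, neg_mul] using this
  exact (Real.tendsto_arctan_atBot.mono_right nhdsWithin_le_nhds).comp h1

theorem stmt_4 (a b t : ℝ) (hab : a < b) :
    ((t < a ∨ b < t) →
      Tendsto (fun y : ℝ => Real.arctan ((b - t) / y) - Real.arctan ((a - t) / y))
        (nhdsWithin 0 (Set.Ioi 0)) (nhds 0)) ∧
    ((t = a ∨ t = b) →
      Tendsto (fun y : ℝ => Real.arctan ((b - t) / y) - Real.arctan ((a - t) / y))
        (nhdsWithin 0 (Set.Ioi 0)) (nhds (Real.pi / 2))) ∧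
    ((a < t ∧ t < b) →
      Tendsto (fun y : ℝ => Real.arctan ((b - t) / y) - Real.arctan ((a - t) / y))
        (nhdsWithin 0 (Set.Ioi 0)) (nhds Real.pi)) := by
  refine ⟨?_, ?_, ?_⟩
  · rintro (h | h)
    · have hB : 0 < b - t := by linarith
      have hA : 0 < a - t := by linarith
      simpa using (aux_pos _ hB).sub (aux_pos _ hA)
    · have hB : b - t < 0 := by linarith
      have hA : a - t < 0 := by linarith
      simpa using (aux_neg _ hB).sub (aux_neg _ hA)
  · rintro (rfl | rfl)
    · have hB : 0 < b - t := by linarith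
      simpa using (aux_pos _ hB).sub (tendsto_const_nhds (x := (0:ℝ)))
    · have hA : a - t < 0 := by linarith
      have := (tendsto_const_nhds (x := (0:ℝ))
        (f := nhdsWithin (0:ℝ) (Set.Ioi 0))).sub (aux_neg _ hA)
      simpa using this
  · rintro ⟨h1, h2⟩
    have hB : 0 < b - t := by linarith
    have hA : a - t < 0 := by linarith
    have := (aux_pos _ hB).sub (aux_neg _ hA)
    have heq : Real.pi / 2 - -(Real.pi / 2) = Real.pi := by ring
    simpa [heq] using this
end

section
/- For μ a probability measure supported in [0,1] with distribution function μ(x), and z in the upper half-plane, ∫_{[0,1]} log(1/(1−tz)) dμ(t) + ∫_{[0,1]} log√(1+t²) dμ(t) = ∫₁^∞ (1/(t−z) − t/(1+t²)) · (1 − μ(1/t)) dt, where the principal branch of the logarithm is used. -/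
/-!
For `t ∈ (0, 1]` the kernel `1/(s - z) - s/(1 + s²)` has the primitive
`log (s - z) - log √(1 + s²)`, which tends to `0` as `s → ∞` and equals
`-(log (1/(1 - t z)) + log √(1 + t²))` at `s = 1/t`. So the integrand on the left at `t` is the
integral of the kernel over `{s ≥ 1 | s t ≥ 1}`, for `t = 0` too. The kernel is `O(s⁻²)`, so
Fubini applies, and for fixed `s` the `t`-integral of the indicator is
`μ [1/s, ∞) = 1 - μ (-∞, 1/s)`.
-/

open MeasureTheory Complex Set Filter Topology Asymptotics

noncomputable def logKernel (z : ℂ) (s : ℝ) : ℂ :=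
  1 / ((s : ℂ) - z) - (s : ℂ) / (1 + (s : ℂ) ^ 2)

noncomputable def logKernelPrimitive (z : ℂ) (s : ℝ) : ℂ :=
  log ((s : ℂ) - z) - ((Real.log (1 + s ^ 2) / 2 : ℝ) : ℂ)

lemma ofReal_sub_mem_slitPlane {z : ℂ} (hz : 0 < z.im) (s : ℝ) : (s : ℂ) - z ∈ slitPlane :=
  mem_slitPlane_iff.2 <| Or.inr <| by simp [hz.ne']

lemma one_sub_ofReal_mul_mem_slitPlane {z : ℂ} (hz : 0 < z.im) (u : ℝ) :
    1 - (u : ℂ) * z ∈ slitPlane := by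
  rcases eq_or_ne u 0 with rfl | hu
  · simp
  · exact mem_slitPlane_iff.2 <| Or.inr <| by simp [hu, hz.ne']

lemma one_add_ofReal_sq_ne_zero (s : ℝ) : 1 + (s : ℂ) ^ 2 ≠ 0 := by
  exact_mod_cast (by positivity : (0 : ℝ) < 1 + s ^ 2).ne'

lemma log_one_div_one_sub_ofReal_mul {z : ℂ} (hz : 0 < z.im) (u : ℝ) :
    log (1 / (1 - (u : ℂ) * z)) = -log (1 - (u : ℂ) * z) := by
  rw [one_div, log_inv _ (slitPlane_arg_ne_pi (one_sub_ofReal_mul_mem_slitPlane hz u))]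

lemma hasDerivAt_logKernelPrimitive {z : ℂ} (hz : 0 < z.im) (s : ℝ) :
    HasDerivAt (logKernelPrimitive z) (logKernel z s) s := by
  have hlog : HasDerivAt (fun s : ℝ => log ((s : ℂ) - z)) ((s : ℂ) - z)⁻¹ s := by
    simpa using ((hasDerivAt_log (ofReal_sub_mem_slitPlane hz s)).comp (s : ℂ)
      ((hasDerivAt_id (s : ℂ)).sub_const z)).comp_ofReal
  have hreal : HasDerivAt (fun s : ℝ => Real.log (1 + s ^ 2) / 2) (s / (1 + s ^ 2)) s :=
    ((((hasDerivAt_pow 2 s).const_add 1).log (by positivity)).div_const 2).congr_deriv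
      (by field_simp; ring)
  refine (hlog.sub hreal.ofReal_comp).congr_deriv ?_
  simp [logKernel, one_div]

lemma logKernelPrimitive_inv {z : ℂ} (hz : 0 < z.im) {u : ℝ} (hu : 0 < u) :
    logKernelPrimitive z u⁻¹ =
      log (1 - (u : ℂ) * z) - ((Real.log (1 + u ^ 2) / 2 : ℝ) : ℂ) := by
  have hsub : ((u⁻¹ : ℝ) : ℂ) - z = ((u⁻¹ : ℝ) : ℂ) * (1 - u * z) := by
    have : (u : ℂ) ≠ 0 := by exact_mod_cast hu.ne'
    push_cast
    field_simp
  have hsq : 1 + u⁻¹ ^ 2 = (u ^ 2)⁻¹ * (1 + u ^ 2) := by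
    field_simp
    ring
  rw [logKernelPrimitive, hsub, log_ofReal_mul (inv_pos.2 hu)
    (slitPlane_ne_zero (one_sub_ofReal_mul_mem_slitPlane hz u)), hsq,
    Real.log_mul (by positivity) (by positivity), Real.log_inv, Real.log_inv, Real.log_pow]
  push_cast
  ring

lemma tendsto_logKernelPrimitive_atTop {z : ℂ} (hz : 0 < z.im) :
    Tendsto (logKernelPrimitive z) atTop (𝓝 0) := by
  let h : ℝ → ℂ := fun u => log (1 - (u : ℂ) * z) - ((Real.log (1 + u ^ 2) / 2 : ℝ) : ℂ)
  have hcont : ContinuousAt h 0 :=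
    ((continuousAt_clog (by simp)).comp (by fun_prop)).sub
      (continuous_ofReal.continuousAt.comp (by fun_prop (disch := positivity)))
  have hlim : Tendsto (h ∘ Inv.inv) atTop (𝓝 0) := by
    simpa [h] using hcont.tendsto.comp tendsto_inv_atTop_zero
  refine hlim.congr' ?_
  filter_upwards [eventually_gt_atTop 0] with s hs
  simp only [Function.comp, h]
  rw [← logKernelPrimitive_inv hz (inv_pos.2 hs), inv_inv]

lemma continuous_logKernel {z : ℂ} (hz : 0 < z.im) : Continuous (logKernel z) :=
  (continuous_const.div (by fun_prop)
    fun s => slitPlane_ne_zero (ofReal_sub_mem_slitPlane hz s)).sub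
      (continuous_ofReal.div (by fun_prop) one_add_ofReal_sq_ne_zero)

lemma logKernel_inv {z : ℂ} (hz : 0 < z.im) {u : ℝ} (hu : u ≠ 0) :
    logKernel z u⁻¹ = u ^ 2 • (((u : ℂ) + z) / ((1 - u * z) * (1 + (u : ℂ) ^ 2))) := by
  have hu' : (u : ℂ) ≠ 0 := by exact_mod_cast hu
  have h1 := slitPlane_ne_zero (one_sub_ofReal_mul_mem_slitPlane hz u)
  have h2 := one_add_ofReal_sq_ne_zero u
  have h2' : (u : ℂ) ^ 2 + 1 ≠ 0 := by rwa [add_comm]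
  have h3 := slitPlane_ne_zero (ofReal_sub_mem_slitPlane hz u⁻¹)
  have h4 := one_add_ofReal_sq_ne_zero u⁻¹
  push_cast at h3 h4
  rw [logKernel, Complex.real_smul]
  push_cast
  field_simp
  ring

lemma logKernel_isBigO_atTop {z : ℂ} (hz : 0 < z.im) :
    logKernel z =O[atTop] fun s => s ^ (-2 : ℝ) := by
  let g : ℝ → ℂ := fun u => ((u : ℂ) + z) / ((1 - u * z) * (1 + (u : ℂ) ^ 2))
  have hg : ContinuousAt g 0 := ContinuousAt.div (by fun_prop) (by fun_prop) (by simp)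
  have hbdd : (g ∘ Inv.inv) =O[atTop] fun _ => (1 : ℝ) :=
    (hg.tendsto.comp tendsto_inv_atTop_zero).isBigO_one ℝ
  refine ((isBigO_refl (fun s : ℝ => s ^ (-2 : ℝ)) atTop).smul hbdd).congr' ?_ ?_
  · filter_upwards [eventually_gt_atTop 0] with s hs
    have h := logKernel_inv hz (inv_ne_zero hs.ne')
    rw [inv_inv] at h
    rw [h, Real.rpow_neg hs.le, Real.rpow_two, inv_pow]
    rfl
  · simp

lemma integrableOn_logKernel_Ici {z : ℂ} (hz : 0 < z.im) (a : ℝ) :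
    IntegrableOn (logKernel z) (Ici a) :=
  integrableOn_Ici_iff_integrableAtFilter_atTop.2
    ⟨(logKernel_isBigO_atTop hz).integrableAtFilter
      ((continuous_logKernel hz).stronglyMeasurableAtFilter _ _)
      (integrableAtFilter_rpow_atTop_iff.2 (by norm_num)),
    (continuous_logKernel hz).continuousOn.locallyIntegrableOn measurableSet_Ici⟩

lemma integral_Ioi_logKernel {z : ℂ} (hz : 0 < z.im) (a : ℝ) :
    ∫ s in Ioi a, logKernel z s = -logKernelPrimitive z a := by
  rw [integral_Ioi_of_hasDerivAt_of_tendsto' (fun s _ => hasDerivAt_logKernelPrimitive hz s)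
    ((integrableOn_logKernel_Ici hz a).mono_set Ioi_subset_Ici_self)
    (tendsto_logKernelPrimitive_atTop hz), zero_sub]

lemma neg_logKernelPrimitive_inv {z : ℂ} (hz : 0 < z.im) {u : ℝ} (hu : 0 < u) :
    -logKernelPrimitive z u⁻¹ =
      log (1 / (1 - (u : ℂ) * z)) + ((Real.log (Real.sqrt (1 + u ^ 2)) : ℝ) : ℂ) := by
  rw [logKernelPrimitive_inv hz hu, log_one_div_one_sub_ofReal_mul hz,
    Real.log_sqrt (by positivity)]
  push_cast
  ring

lemma integral_Ici_one_indicator_logKernel {z : ℂ} (hz : 0 < z.im) {t : ℝ}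
    (ht : t ∈ Icc 0 1) :
    ∫ s in Ici 1, {s : ℝ | 1 ≤ s * t}.indicator (logKernel z) s =
      log (1 / (1 - (t : ℂ) * z)) + ((Real.log (Real.sqrt (1 + t ^ 2)) : ℝ) : ℂ) := by
  rcases ht.1.eq_or_lt with rfl | ht0
  · simp
  · have hset : {s : ℝ | 1 ≤ s * t} = Ici t⁻¹ := by
      ext s
      simp [inv_le_iff_one_le_mul₀ ht0]
    rw [hset, setIntegral_indicator measurableSet_Ici, Ici_inter_Ici,
      sup_eq_right.2 ((one_le_inv₀ ht0).2 ht.2), integral_Ici_eq_integral_Ioi,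
      integral_Ioi_logKernel hz, neg_logKernelPrimitive_inv hz ht0]

lemma integral_measureReal_Ici_inv_smul {E : Type*} [NormedAddCommGroup E] [NormedSpace ℝ E]
    [CompleteSpace E] (ν : Measure ℝ) [IsFiniteMeasure ν] {A : Set ℝ} (hA : MeasurableSet A)
    (hA0 : A ⊆ Ioi 0) {g : ℝ → E} (hg : IntegrableOn g A) :
    ∫ s in A, ν.real (Ici s⁻¹) • g s =
      ∫ t, (∫ s in A, {s : ℝ | 1 ≤ s * t}.indicator g s) ∂ν := by
  have hS : MeasurableSet {q : ℝ × ℝ | 1 ≤ q.1 * q.2} :=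
    measurableSet_le measurable_const (measurable_fst.mul measurable_snd)
  have hint : Integrable (Function.uncurry fun s t => {s : ℝ | 1 ≤ s * t}.indicator g s)
      ((volume.restrict A).prod ν) :=
    (hg.comp_fst ν).indicator hS
  refine Eq.trans ?_ (integral_integral_swap hint)
  refine setIntegral_congr_fun hA fun s hs => ?_
  have hind :
      (fun t => {s : ℝ | 1 ≤ s * t}.indicator g s) = (Ici s⁻¹).indicator fun _ => g s := by
    ext t
    simp [indicator_apply, inv_le_iff_one_le_mul₀' (mem_Ioi.1 (hA0 hs))]
  simp only [hind, integral_indicator_const _ measurableSet_Ici]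

theorem stmt_12 (μ : Measure ℝ) [IsProbabilityMeasure μ]
    (hsupp : μ (Set.Icc (0 : ℝ) 1)ᶜ = 0)
    (z : ℂ) (hz : 0 < z.im) :
    (∫ t in Set.Icc (0 : ℝ) 1, Complex.log (1 / (1 - (t : ℂ) * z)) ∂μ) +
      ((∫ t in Set.Icc (0 : ℝ) 1, Real.log (Real.sqrt (1 + t ^ 2)) ∂μ : ℝ) : ℂ) =
    ∫ t in Set.Ioi (1 : ℝ),
      (1 / ((t : ℂ) - z) - (t : ℂ) / (1 + (t : ℂ) ^ 2)) *
        ((1 : ℂ) - ((μ (Set.Iio (1 / t))).toReal : ℂ)) := by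
  have hlog : IntegrableOn (fun t : ℝ => log (1 / (1 - (t : ℂ) * z))) (Icc 0 1) μ := by
    refine (Continuous.continuousOn ?_).integrableOn_compact isCompact_Icc
    simp_rw [log_one_div_one_sub_ofReal_mul hz]
    exact ((continuous_const.sub (by fun_prop)).clog
      fun t => one_sub_ofReal_mul_mem_slitPlane hz t).neg
  have hsqrt : IntegrableOn (fun t : ℝ => ((Real.log (Real.sqrt (1 + t ^ 2)) : ℝ) : ℂ))
      (Icc 0 1) μ :=
    (continuous_ofReal.comp ((by fun_prop : Continuous fun t : ℝ => Real.sqrt (1 + t ^ 2)).log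
      fun t => by positivity)).continuousOn.integrableOn_compact isCompact_Icc
  calc _ = ∫ t in Icc 0 1, (log (1 / (1 - (t : ℂ) * z)) +
          ((Real.log (Real.sqrt (1 + t ^ 2)) : ℝ) : ℂ)) ∂μ := by
        rw [integral_add hlog hsqrt, integral_complex_ofReal]
    _ = ∫ t in Icc 0 1,
          (∫ s in Ici 1, {s : ℝ | 1 ≤ s * t}.indicator (logKernel z) s) ∂μ :=
        setIntegral_congr_fun measurableSet_Icc fun t ht =>
          (integral_Ici_one_indicator_logKernel hz ht).symm
    _ = ∫ s in Ici 1, (μ.restrict (Icc 0 1)).real (Ici s⁻¹) • logKernel z s :=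
        (integral_measureReal_Ici_inv_smul _ measurableSet_Ici
          (fun _ hs => mem_Ioi.2 (one_pos.trans_le hs)) (integrableOn_logKernel_Ici hz 1)).symm
    _ = _ := by
        have hμ : μ.restrict (Icc 0 1) = μ :=
          Measure.restrict_eq_self_of_ae_mem (mem_ae_iff.2 hsupp)
        rw [hμ, integral_Ici_eq_integral_Ioi]
        refine setIntegral_congr_fun measurableSet_Ioi fun s _ => ?_
        rw [← compl_Iio, probReal_compl_eq_one_sub measurableSet_Iio, real_smul, mul_comm,
          one_div s, measureReal_def]
        push_cast
        rfl
end

section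
/- Let f be holomorphic on the upper half-plane with 0 < Im f(z) < π for all z ∈ ℍ, and set Φ = e^f. Then for every δ ∈ (0,1), both Φ and 1/Φ belong to the Hardy space H_δ of the upper half-plane; equivalently, sup_{0≤r<1} ∫_{−π}^{π} |Φ_D(re^{iθ})|^{±δ} dθ < ∞ where Φ_D(w) := Φ(i(1−w)/(1+w)). -/
/-! Pull `δ f` back to the disk and rotate it: `g w = δ f(i(1-w)/(1+w)) - iδπ/2` has
`|Im g| < δπ/2`, hence `Re e^g ≥ cos(δπ/2) e^{Re g} = cos(δπ/2) |Φ_D|^δ`. By the mean value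
property the circle averages of `Re e^g` all equal `Re e^{g(0)}`, which bounds the integral means
of `|Φ_D|^δ` uniformly in `r`; applying the same to `-g` handles `1/Φ`. -/

open Complex MeasureTheory intervalIntegral Metric Real

lemma exp_re_mul_cos_le_re_exp {z : ℂ} {a : ℝ} (hz : |z.im| ≤ a) (ha : a ≤ π) :
    Real.exp z.re * Real.cos a ≤ (exp z).re := by
  rw [exp_re, ← Real.cos_abs z.im]
  gcongr
  exact Real.cos_le_cos_of_nonneg_of_le_pi (abs_nonneg _) ha hz

theorem cos_mul_circleAverage_exp_re_le {g : ℂ → ℂ} {c : ℂ} {R a : ℝ}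
    (hg : DifferentiableOn ℂ g (closedBall c |R|))
    (him : ∀ z ∈ sphere c |R|, |(g z).im| ≤ a) (ha : a ≤ π) :
    Real.cos a * circleAverage (fun z ↦ Real.exp (g z).re) c R ≤ Real.exp (g c).re := by
  have hcont : ContinuousOn g (sphere c |R|) := hg.continuousOn.mono sphere_subset_closedBall
  have hexp : ContinuousOn (fun z ↦ exp (g z)) (sphere c |R|) :=
    continuous_exp.comp_continuousOn hcont
  calc Real.cos a * circleAverage (fun z ↦ Real.exp (g z).re) c R
      = circleAverage (fun z ↦ Real.exp (g z).re * Real.cos a) c R := by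
        simp_rw [mul_comm _ (Real.cos a)]
        exact (circleAverage_fun_smul (a := Real.cos a)).symm
    _ ≤ circleAverage (reCLM ∘ fun z ↦ exp (g z)) c R :=
        circleAverage_mono
          (((continuous_re.comp_continuousOn hcont).rexp).mul continuousOn_const).circleIntegrable'
          (reCLM.continuous.comp_continuousOn hexp).circleIntegrable'
          fun z hz ↦ exp_re_mul_cos_le_re_exp (him z hz) ha
    _ = (exp (g c)).re := by
        rw [reCLM.circleAverage_comp_comm hexp.circleIntegrable',
          (hg.cexp.mono closure_ball_subset_closedBall).diffContOnCl.circleAverage, reCLM_apply]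
    _ ≤ ‖exp (g c)‖ := re_le_norm _
    _ = Real.exp (g c).re := norm_exp _

lemma intervalIntegral_neg_pi_pi_eq_circleAverage (F : ℂ → ℝ) (r : ℝ) :
    ∫ θ in (-π)..π, F (r * exp (θ * I)) = 2 * π * circleAverage F 0 r := by
  rw [circleAverage_eq_integral_add (-π), smul_eq_mul, ← mul_assoc,
    mul_inv_cancel₀ two_pi_pos.ne', one_mul, integral_comp_add_right (fun θ ↦ F (circleMap 0 r θ))]
  simp only [circleMap_zero]
  congr 1 <;> ring

lemma one_add_ne_zero_of_norm_lt_one {w : ℂ} (hw : ‖w‖ < 1) : 1 + w ≠ 0 := by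
  intro h
  rw [eq_neg_of_add_eq_zero_right h, norm_neg, norm_one] at hw
  exact hw.false

lemma im_I_mul_one_sub_div_one_add_pos {w : ℂ} (hw : ‖w‖ < 1) :
    0 < (I * (1 - w) / (1 + w)).im := by
  have him : (I * (1 - w) / (1 + w)).im = (1 - normSq w) / normSq (1 + w) := by
    simp only [div_im, mul_im, mul_re, sub_re, sub_im, add_re, add_im, I_re, I_im, one_re,
      one_im, normSq_apply]
    ring
  rw [him, normSq_eq_norm_sq]
  exact div_pos (by nlinarith [norm_nonneg w]) (normSq_pos.2 (one_add_ne_zero_of_norm_lt_one hw))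

lemma differentiableOn_comp_I_mul_one_sub_div_one_add {f : ℂ → ℂ}
    (hf : DifferentiableOn ℂ f {z : ℂ | 0 < z.im}) :
    DifferentiableOn ℂ (fun w ↦ f (I * (1 - w) / (1 + w))) (ball 0 1) := by
  refine hf.comp ?_ fun w hw ↦ im_I_mul_one_sub_div_one_add_pos (mem_ball_zero_iff.1 hw)
  exact (by fun_prop : Differentiable ℂ fun w : ℂ ↦ I * (1 - w)).differentiableOn.div
    (by fun_prop) fun w hw ↦ one_add_ne_zero_of_norm_lt_one (mem_ball_zero_iff.1 hw)

theorem cos_mul_intervalIntegral_exp_re_le {g : ℂ → ℂ} {a r : ℝ}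
    (hg : DifferentiableOn ℂ g (ball 0 1)) (him : ∀ w ∈ ball (0 : ℂ) 1, |(g w).im| ≤ a)
    (ha : a ≤ π) (hr : |r| < 1) :
    Real.cos a * ∫ θ in (-π)..π, Real.exp (g (r * exp (θ * I))).re
      ≤ 2 * π * Real.exp (g 0).re := by
  have hball : closedBall (0 : ℂ) |r| ⊆ ball 0 1 := closedBall_subset_ball hr
  rw [intervalIntegral_neg_pi_pi_eq_circleAverage (fun z ↦ Real.exp (g z).re), mul_left_comm]
  gcongr
  exact cos_mul_circleAverage_exp_re_le (hg.mono hball)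
    (fun z hz ↦ him z (hball (sphere_subset_closedBall hz))) ha

theorem stmt_15 (f : ℂ → ℂ)
    (hdiff : DifferentiableOn ℂ f {z : ℂ | 0 < z.im})
    (him : ∀ z : ℂ, 0 < z.im → 0 < (f z).im ∧ (f z).im < Real.pi)
    (δ : ℝ) (hδ : δ ∈ Set.Ioo (0 : ℝ) 1) :
    ∃ C : ℝ, ∀ r : ℝ, 0 ≤ r → r < 1 →
      (∫ θ in (-Real.pi)..Real.pi,
          ‖Complex.exp (f (Complex.I * (1 - r * Complex.exp (θ * Complex.I)) /
            (1 + r * Complex.exp (θ * Complex.I))))‖ ^ δ) ≤ C ∧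
      (∫ θ in (-Real.pi)..Real.pi,
          ‖Complex.exp (-f (Complex.I * (1 - r * Complex.exp (θ * Complex.I)) /
            (1 + r * Complex.exp (θ * Complex.I))))‖ ^ δ) ≤ C := by
  obtain ⟨hδ0, hδ1⟩ := hδ
  set a := δ * π / 2 with ha_def
  have ha : a ≤ π := by nlinarith [pi_pos]
  have hcos : 0 < Real.cos a := cos_pos_of_mem_Ioo ⟨by nlinarith [pi_pos], by nlinarith [pi_pos]⟩
  let g : ℂ → ℂ := fun w ↦ δ * f (I * (1 - w) / (1 + w)) - a * I
  have hg : DifferentiableOn ℂ g (ball 0 1) :=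
    ((differentiableOn_comp_I_mul_one_sub_div_one_add hdiff).const_mul _).sub_const _
  have him_g : ∀ w ∈ ball (0 : ℂ) 1, |(g w).im| ≤ a := by
    intro w hw
    obtain ⟨hf0, hfπ⟩ := him _ (im_I_mul_one_sub_div_one_add_pos (mem_ball_zero_iff.1 hw))
    simp only [g, sub_im, mul_im, ofReal_re, ofReal_im, I_re, I_im]
    rw [abs_le]
    constructor <;> nlinarith
  have hnorm_pos : ∀ w, ‖exp (f (I * (1 - w) / (1 + w)))‖ ^ δ = Real.exp (g w).re := by
    intro w
    simp [g, norm_exp, ← Real.exp_mul, mul_comm]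
  have hnorm_neg : ∀ w, ‖exp (-f (I * (1 - w) / (1 + w)))‖ ^ δ = Real.exp (-g w).re := by
    intro w
    simp [g, norm_exp, ← Real.exp_mul, mul_comm]
  refine ⟨2 * π * (Real.exp (g 0).re + Real.exp (-g 0).re) / Real.cos a, fun r hr0 hr1 ↦ ?_⟩
  have hr : |r| < 1 := abs_lt.2 ⟨by linarith, hr1⟩
  have h₁ := cos_mul_intervalIntegral_exp_re_le hg him_g ha hr
  have h₂ := cos_mul_intervalIntegral_exp_re_le hg.neg (by simpa using him_g) ha hr
  simp only [Pi.neg_apply] at h₂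
  simp only [hnorm_pos, hnorm_neg, le_div_iff₀ hcos]
  constructor <;> nlinarith [Real.exp_pos (g 0).re, Real.exp_pos (-g 0).re, pi_pos]
end

section
/- Let f belong to log P, i.e. f is holomorphic on ℍ with 0 ≤ Im f ≤ π, and suppose the non-tangential boundary value f(x+i0) exists for a.e. x ∈ ℝ. Then for every δ ∈ (0,1), ∫_ℝ exp(δ|f(x+i0)|)/(1+x²) dx < ∞ and, for every p > 0, ∫_ℝ |f(x+i0)|^p/(1+x²) dx < ∞. -/
open Complex MeasureTheory Filter Metric Set Topology
open scoped ENNReal Real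

/-!
For `0 < δ < 1` the map `Φ w = 2 cosh (δ (w - iπ/2))` sends the strip `0 ≤ Im w ≤ π` into the
right half-plane, with `Re Φ w ≥ cos (δπ/2) e^{δ |Re w|}`. So it suffices to show that a holomorphic
`F` on the upper half-plane with `Re F ≥ 0` has boundary values with
`∫ Re F(x + i0) / (1 + x²) dx ≤ π Re F(i)`. When `F` is continuous up to `ℝ`, this is the mean value
property of `F ∘ cayley` on the circles `|ζ| = r`, Fatou's lemma as `r → 1`, and the substitution
`θ = 2 arctan t + π`, whose Jacobian is the Poisson weight `2 / (1 + t²)`. In general apply this to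
`F (· + iy)` and let `y → 0`, again by Fatou's lemma. Powers follow from `t^p ≤ (p/δ)^p e^{δt}`.
-/

theorem lintegral_le_of_tendsto_ae {α ι : Type*} [MeasurableSpace α] {μ : Measure α}
    {l : Filter ι} [l.NeBot] [l.IsCountablyGenerated] {F : ι → α → ℝ≥0∞} {G : α → ℝ≥0∞}
    {c : ι → ℝ≥0∞} {C : ℝ≥0∞} (hF : ∀ᶠ i in l, AEMeasurable (F i) μ)
    (hFG : ∀ᵐ x ∂μ, Tendsto (fun i => F i x) l (𝓝 (G x)))
    (hc : Tendsto c l (𝓝 C)) (hle : ∀ᶠ i in l, ∫⁻ x, F i x ∂μ ≤ c i) :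
    ∫⁻ x, G x ∂μ ≤ C := by
  obtain ⟨u, hu⟩ := l.exists_seq_tendsto
  obtain ⟨N, hN⟩ := eventually_atTop.1 (hu.eventually (hF.and hle))
  have hv : Tendsto (fun n => u (n + N)) atTop l := hu.comp (tendsto_add_atTop_nat N)
  calc ∫⁻ x, G x ∂μ = ∫⁻ x, liminf (fun n => F (u (n + N)) x) atTop ∂μ :=
        lintegral_congr_ae (hFG.mono fun x hx => ((hx.comp hv).liminf_eq).symm)
    _ ≤ liminf (fun n => ∫⁻ x, F (u (n + N)) x ∂μ) atTop :=
        lintegral_liminf_le' fun n => (hN _ (Nat.le_add_left N n)).1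
    _ ≤ liminf (fun n => c (u (n + N))) atTop :=
        liminf_le_liminf (Eventually.of_forall fun n => (hN _ (Nat.le_add_left N n)).2)
    _ = C := (hc.comp hv).liminf_eq

theorem DiffContOnCl.setIntegral_re_circleMap {G : ℂ → ℂ} {c : ℂ} {r : ℝ}
    (hG : DiffContOnCl ℂ G (ball c |r|)) :
    ∫ θ in Ioc 0 (2 * π), (G (circleMap c r θ)).re = 2 * π * (G c).re := by
  have hint : CircleIntegrable G c r :=
    (hG.continuousOn_ball.mono sphere_subset_closedBall).circleIntegrable'
  have h := Complex.reCLM.circleAverage_comp_comm hint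
  rw [hG.circleAverage, Real.circleAverage_def,
    intervalIntegral.integral_of_le Real.two_pi_pos.le] at h
  simp only [Function.comp_def, reCLM_apply, smul_eq_mul] at h
  field_simp at h
  linarith

theorem lintegral_re_le_of_tendsto_circleMap {G : ℂ → ℂ} {b : ℝ → ℂ}
    (hG : DifferentiableOn ℂ G (ball 0 1)) (hre : ∀ ζ ∈ ball (0 : ℂ) 1, 0 ≤ (G ζ).re)
    (hb : ∀ᵐ θ ∂volume.restrict (Ioo 0 (2 * π)),
      Tendsto (fun r => G (circleMap 0 r θ)) (𝓝[<] 1) (𝓝 (b θ))) :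
    ∫⁻ θ in Ioo 0 (2 * π), ENNReal.ofReal (b θ).re
      ≤ ENNReal.ofReal (2 * π * (G 0).re) := by
  have hr : ∀ᶠ r in 𝓝[<] (1 : ℝ), r ∈ Ioo 0 1 := Ioo_mem_nhdsLT one_pos
  have hmem : ∀ r ∈ Ioo (0 : ℝ) 1, ∀ θ, circleMap 0 r θ ∈ ball (0 : ℂ) 1 := fun r hr θ => by
    simp [abs_of_pos hr.1, hr.2]
  have hcont : ∀ r ∈ Ioo (0 : ℝ) 1, Continuous fun θ => (G (circleMap 0 r θ)).re :=
    fun r hr => continuous_re.comp <|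
      hG.continuousOn.comp_continuous (continuous_circleMap 0 r) (hmem r hr)
  refine lintegral_le_of_tendsto_ae (F := fun r θ => ENNReal.ofReal (G (circleMap 0 r θ)).re)
    (hr.mono fun r hr => ?_)
    (hb.mono fun θ hθ => (ENNReal.continuous_ofReal.tendsto _).comp
      ((continuous_re.tendsto _).comp hθ)) tendsto_const_nhds (hr.mono fun r hr => ?_)
  · exact (ENNReal.continuous_ofReal.comp (hcont r hr)).aemeasurable
  · have hdc : DiffContOnCl ℂ G (ball 0 |r|) := (hG.mono <| closure_ball_subset_closedBall.trans
      (closedBall_subset_ball (by rw [abs_of_pos hr.1]; exact hr.2))).diffContOnCl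
    rw [← hdc.setIntegral_re_circleMap, integral_Ioc_eq_integral_Ioo,
      ofReal_integral_eq_lintegral_ofReal
        ((hcont r hr).integrableOn_Ioc.mono_set Ioo_subset_Ioc_self)
        (ae_of_all _ fun θ => hre _ (hmem r hr θ))]

noncomputable def cayley (ζ : ℂ) : ℂ := I * (1 + ζ) / (1 - ζ)

theorem cayley_zero : cayley 0 = I := by simp [cayley]

theorem differentiableAt_cayley {ζ : ℂ} (hζ : ζ ≠ 1) : DifferentiableAt ℂ cayley ζ :=
  (by fun_prop : DifferentiableAt ℂ (fun ζ => I * (1 + ζ)) ζ).div (by fun_prop)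
    (sub_ne_zero.2 hζ.symm)

theorem im_cayley (ζ : ℂ) : (cayley ζ).im = (1 - normSq ζ) / normSq (1 - ζ) := by
  simp only [cayley, div_im, normSq_apply, mul_im, mul_re, add_im, add_re, sub_im, sub_re, I_re,
    I_im, one_re, one_im]
  ring

theorem im_cayley_nonneg {ζ : ℂ} (hζ : ‖ζ‖ ≤ 1) : 0 ≤ (cayley ζ).im := by
  rw [im_cayley, normSq_eq_norm_sq]
  exact div_nonneg (by nlinarith [norm_nonneg ζ]) (normSq_nonneg _)

theorem im_cayley_pos {ζ : ℂ} (hζ : ‖ζ‖ < 1) : 0 < (cayley ζ).im := by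
  have hne : 1 - ζ ≠ 0 := sub_ne_zero.2 fun h => by simp [← h] at hζ
  rw [im_cayley, normSq_eq_norm_sq]
  exact div_pos (by nlinarith [norm_nonneg ζ]) (normSq_pos.2 hne)

theorem circleMap_zero_one_ne_one {θ : ℝ} (h0 : 0 < θ) (h1 : θ < 2 * π) :
    circleMap 0 1 θ ≠ 1 := fun h => by
  have hcos : Real.cos θ = 1 := by simpa [circleMap, exp_ofReal_mul_I_re] using congrArg re h
  rw [Real.cos_eq_one_iff_of_lt_of_lt (by linarith) h1] at hcos
  exact h0.ne' hcos

theorem cayley_circleMap_two_mul_arctan_add_pi (t : ℝ) :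
    cayley (circleMap 0 1 (2 * Real.arctan t + π)) = t := by
  set c := Real.cos (Real.arctan t)
  have hc : (c : ℂ) ^ 2 * (1 + t ^ 2) = 1 := by
    have h : c ^ 2 * (1 + t ^ 2) = 1 := by
      rw [show c ^ 2 = _ from Real.cos_sq_arctan t]; field_simp
    exact_mod_cast h
  have hs : Real.sin (Real.arctan t) = t * c := by
    have h := Real.tan_arctan t
    rwa [Real.tan_eq_sin_div_cos, div_eq_iff (Real.cos_arctan_pos t).ne'] at h
  have he : exp (Real.arctan t * I) = c * (1 + t * I) := by
    rw [exp_mul_I, ← ofReal_cos, ← ofReal_sin, hs, ofReal_mul]; ring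
  have hζ : circleMap 0 1 (2 * Real.arctan t + π) = -(c * (1 + t * I)) ^ 2 := by
    rw [circleMap, ← he, ← exp_nat_mul, ofReal_add, ofReal_mul, add_mul, exp_add,
      exp_pi_mul_I]
    push_cast
    ring_nf
  have hden : (1 : ℂ) - -(c * (1 + t * I)) ^ 2 = 2 * c ^ 2 * (1 + t * I) := by
    linear_combination -hc + (c ^ 2 * t ^ 2) * I_sq
  have hc0 : (c : ℂ) ≠ 0 := ofReal_ne_zero.2 (Real.cos_arctan_pos t).ne'
  have ht : 1 + t * I ≠ 0 := fun h => by simpa using congrArg re h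
  rw [cayley, hζ, div_eq_iff (by rw [hden]; exact mul_ne_zero (by simpa using hc0) ht)]
  linear_combination (t - I) * hc + (-2 * c ^ 2 * t - c ^ 2 * t ^ 3 - I * c ^ 2 * t ^ 2) * I_sq

theorem tendsto_cayley_circleMap {H : ℂ → ℂ} (hc : ContinuousOn H {z | 0 ≤ z.im}) {θ : ℝ}
    (hθ : circleMap 0 1 θ ≠ 1) :
    Tendsto (fun r => H (cayley (circleMap 0 r θ))) (𝓝[<] 1)
      (𝓝 (H (cayley (circleMap 0 1 θ)))) := by
  have hr : Tendsto (fun r => circleMap 0 r θ) (𝓝[<] 1) (𝓝 (circleMap 0 1 θ)) :=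
    ((by unfold circleMap; fun_prop : Continuous fun r : ℝ => circleMap 0 r θ).tendsto 1).mono_left
      nhdsWithin_le_nhds
  have him : ∀ᶠ r in 𝓝[<] (1 : ℝ), cayley (circleMap 0 r θ) ∈ {z : ℂ | 0 ≤ z.im} :=
    mem_of_superset (Ioo_mem_nhdsLT one_pos) fun r hr =>
      im_cayley_nonneg (by simp [abs_of_pos hr.1, hr.2.le])
  exact (hc _ (im_cayley_nonneg (by simp))).tendsto.comp
    (tendsto_nhdsWithin_iff.2 ⟨((differentiableAt_cayley hθ).continuousAt.tendsto).comp hr, him⟩)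

theorem lintegral_Ioo_eq_lintegral_two_mul_arctan_add_pi (F : ℝ → ℝ≥0∞) :
    ∫⁻ θ in Ioo 0 (2 * π), F θ
      = ∫⁻ t, ENNReal.ofReal (2 / (1 + t ^ 2)) * F (2 * Real.arctan t + π) := by
  have himage : (fun t => 2 * Real.arctan t + π) '' univ = Ioo 0 (2 * π) := by
    ext θ
    simp only [image_univ, mem_range, mem_Ioo]
    constructor
    · rintro ⟨t, rfl⟩
      have := Real.arctan_mem_Ioo t
      constructor <;> linarith [this.1, this.2]
    · rintro ⟨h0, h1⟩
      refine ⟨Real.tan ((θ - π) / 2), ?_⟩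
      rw [Real.arctan_tan (by linarith) (by linarith)]
      ring
  have hderiv : ∀ t ∈ univ, HasDerivWithinAt (fun t => 2 * Real.arctan t + π)
      (2 / (1 + t ^ 2)) univ t := fun t _ => by
    rw [div_eq_mul_inv]
    exact (((Real.hasDerivAt_arctan' t).const_mul 2).add_const π).hasDerivWithinAt
  rw [← himage, lintegral_image_eq_lintegral_abs_deriv_mul MeasurableSet.univ hderiv
    (fun s _ t _ h => Real.arctan_injective (by simpa using h)), Measure.restrict_univ]
  exact lintegral_congr fun t => by rw [abs_of_pos (by positivity)]

theorem lintegral_re_div_one_add_sq_le {H : ℂ → ℂ}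
    (hd : DifferentiableOn ℂ H {z | 0 < z.im}) (hc : ContinuousOn H {z | 0 ≤ z.im})
    (hre : ∀ z : ℂ, 0 < z.im → 0 ≤ (H z).re) :
    ∫⁻ t : ℝ, ENNReal.ofReal ((H t).re / (1 + t ^ 2)) ≤ ENNReal.ofReal (π * (H I).re) := by
  have hball : ∀ ζ ∈ ball (0 : ℂ) 1, 0 < (cayley ζ).im := fun ζ hζ =>
    im_cayley_pos (mem_ball_zero_iff.1 hζ)
  have hG : DifferentiableOn ℂ (H ∘ cayley) (ball 0 1) := fun ζ hζ =>
    ((hd.differentiableAt ((isOpen_lt continuous_const continuous_im).mem_nhds (hball ζ hζ))).comp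
      ζ (differentiableAt_cayley fun h => by simp [h] at hζ)).differentiableWithinAt
  have hdisk := lintegral_re_le_of_tendsto_circleMap hG (fun ζ hζ => hre _ (hball ζ hζ))
    (b := fun θ => H (cayley (circleMap 0 1 θ)))
    ((ae_restrict_mem measurableSet_Ioo).mono fun θ hθ =>
      tendsto_cayley_circleMap hc (circleMap_zero_one_ne_one hθ.1 hθ.2))
  rw [Function.comp_apply, cayley_zero, lintegral_Ioo_eq_lintegral_two_mul_arctan_add_pi] at hdisk
  simp only [cayley_circleMap_two_mul_arctan_add_pi] at hdisk
  have htwo : ∀ t : ℝ, ENNReal.ofReal (2 / (1 + t ^ 2)) * ENNReal.ofReal (H t).re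
      = 2 * ENNReal.ofReal ((H t).re / (1 + t ^ 2)) := fun t => by
    rw [← ENNReal.ofReal_mul (by positivity), ← ENNReal.ofReal_ofNat 2,
      ← ENNReal.ofReal_mul zero_le_two]
    ring_nf
  rw [lintegral_congr htwo, lintegral_const_mul' 2 _ ENNReal.ofNat_ne_top, mul_assoc,
    ENNReal.ofReal_mul zero_le_two, ENNReal.ofReal_ofNat] at hdisk
  exact (ENNReal.mul_le_mul_iff_right two_ne_zero ENNReal.ofNat_ne_top).1 hdisk

theorem lintegral_re_div_one_add_sq_le_of_tendsto {f : ℂ → ℂ} {g : ℝ → ℂ}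
    (hf : DifferentiableOn ℂ f {z | 0 < z.im}) (hre : ∀ z : ℂ, 0 < z.im → 0 ≤ (f z).re)
    (hg : ∀ᵐ x : ℝ, Tendsto (fun y : ℝ => f (x + y * I)) (𝓝[>] 0) (𝓝 (g x))) :
    ∫⁻ x : ℝ, ENNReal.ofReal ((g x).re / (1 + x ^ 2)) ≤ ENNReal.ofReal (π * (f I).re) := by
  have hshift : ∀ {y : ℝ}, 0 < y → MapsTo (fun z : ℂ => z + y * I) {z | 0 ≤ z.im} {z | 0 < z.im} :=
    fun {y} hy z (hz : 0 ≤ z.im) =>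
      show 0 < (z + y * I).im by simpa using add_pos_of_nonneg_of_pos hz hy
  have hcont : ContinuousOn f {z | 0 < z.im} := hf.continuousOn
  have hpos : ∀ᶠ y in 𝓝[>] (0 : ℝ), 0 < y := self_mem_nhdsWithin
  have hI : Tendsto (fun y : ℝ => f (I + y * I)) (𝓝[>] 0) (𝓝 (f I)) := by
    have hfI : ContinuousAt f I :=
      hcont.continuousAt ((isOpen_lt continuous_const continuous_im).mem_nhds (by simp))
    have hlin : Tendsto (fun y : ℝ => I + y * I) (𝓝 0) (𝓝 I) := by
      simpa using ((by fun_prop : Continuous fun y : ℝ => I + y * I).tendsto 0)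
    exact hfI.tendsto.comp (hlin.mono_left nhdsWithin_le_nhds)
  refine lintegral_le_of_tendsto_ae (l := 𝓝[>] (0 : ℝ))
    (F := fun y (x : ℝ) => ENNReal.ofReal ((f (x + y * I)).re / (1 + x ^ 2)))
    (hpos.mono fun y hy => ?_) (hg.mono fun x hx => ?_)
    ((ENNReal.continuous_ofReal.tendsto _).comp (((continuous_re.tendsto _).comp hI).const_mul _))
    (hpos.mono fun y hy => ?_)
  · have : Continuous fun x : ℝ => f (x + y * I) :=
      hcont.comp_continuous (by fun_prop) fun x => hshift hy (by simp)
    exact (ENNReal.continuous_ofReal.comp ((continuous_re.comp this).div (by fun_prop)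
      fun x => by positivity)).aemeasurable
  · exact (ENNReal.continuous_ofReal.tendsto _).comp
      (((continuous_re.tendsto _).comp hx).div_const _)
  · exact lintegral_re_div_one_add_sq_le (hf.comp (differentiableOn_id.add_const _)
      fun z (hz : 0 < z.im) => hshift hy hz.le) (hcont.comp (continuousOn_id.add continuousOn_const)
      (hshift hy)) fun z hz => hre _ (hshift hy hz.le)

theorem aemeasurable_of_tendsto_vertical {f : ℂ → ℂ} {g : ℝ → ℂ}
    (hf : ContinuousOn f {z | 0 < z.im})
    (hg : ∀ᵐ x : ℝ, Tendsto (fun y : ℝ => f (x + y * I)) (𝓝[>] 0) (𝓝 (g x))) :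
    AEMeasurable g := by
  have hy : Tendsto (fun n : ℕ => 1 / ((n : ℝ) + 1)) atTop (𝓝[>] 0) :=
    tendsto_nhdsWithin_iff.2 ⟨tendsto_one_div_add_atTop_nhds_zero_nat,
      Eventually.of_forall fun n => show (0 : ℝ) < _ by positivity⟩
  refine aemeasurable_of_tendsto_metrizable_ae' (fun n => ?_) (hg.mono fun x hx => hx.comp hy)
  have him : ∀ x : ℝ, 0 < ((x : ℂ) + ((1 / ((n : ℝ) + 1) : ℝ) : ℂ) * I).im := fun x => by
    rw [add_im, ofReal_im, im_ofReal_mul, I_im]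
    positivity
  exact (hf.comp_continuous (by fun_prop) him).aemeasurable

theorem integrable_re_div_one_add_sq_of_tendsto {f : ℂ → ℂ} {g : ℝ → ℂ}
    (hf : DifferentiableOn ℂ f {z | 0 < z.im}) (hre : ∀ z : ℂ, 0 < z.im → 0 ≤ (f z).re)
    (hg : ∀ᵐ x : ℝ, Tendsto (fun y : ℝ => f (x + y * I)) (𝓝[>] 0) (𝓝 (g x))) :
    Integrable fun x : ℝ => (g x).re / (1 + x ^ 2) := by
  have hg_re : ∀ᵐ x : ℝ, 0 ≤ (g x).re := hg.mono fun x hx =>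
    (isClosed_le continuous_const continuous_re).mem_of_tendsto hx
      (eventually_nhdsWithin_of_forall fun y (hy : 0 < y) => hre _ (by simpa using hy))
  have hmeas : AEMeasurable g := aemeasurable_of_tendsto_vertical hf.continuousOn hg
  refine ⟨(by fun_prop : AEMeasurable fun x : ℝ => (g x).re / (1 + x ^ 2)).aestronglyMeasurable, ?_⟩
  rw [hasFiniteIntegral_iff_ofReal (hg_re.mono fun x hx => div_nonneg hx (by positivity))]
  exact (lintegral_re_div_one_add_sq_le_of_tendsto hf hre hg).trans_lt ENNReal.ofReal_lt_top

theorem cos_mul_exp_abs_re_le_re_two_mul_cosh {ζ : ℂ} {c : ℝ} (hζ : |ζ.im| ≤ c)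
    (hc : c ≤ π / 2) :
    Real.cos c * Real.exp |ζ.re| ≤ (2 * cosh ζ).re := by
  have hcos : Real.cos c ≤ Real.cos ζ.im := by
    rw [← Real.cos_abs ζ.im]
    exact Real.cos_le_cos_of_nonneg_of_le_pi (abs_nonneg _) (by linarith [Real.pi_pos]) hζ
  have hc0 : 0 ≤ Real.cos ζ.im := hcos.trans' <| Real.cos_nonneg_of_mem_Icc
    ⟨by linarith [Real.pi_pos, (abs_nonneg ζ.im).trans hζ], hc⟩
  rw [two_cosh, add_re, exp_re, exp_re, neg_re, neg_im, Real.cos_neg]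
  calc Real.cos c * Real.exp |ζ.re| ≤ Real.cos ζ.im * (Real.exp ζ.re + Real.exp (-ζ.re)) :=
        mul_le_mul hcos (Real.exp_abs_le _) (Real.exp_pos _).le hc0
    _ = _ := by ring

theorem cos_mul_exp_mul_norm_le_re_two_mul_cosh {δ : ℝ} (hδ : δ ∈ Icc 0 1) {w : ℂ}
    (hw : w.im ∈ Icc 0 π) :
    Real.cos (δ * π / 2) * Real.exp (δ * ‖w‖)
      ≤ Real.exp (δ * π) * (2 * cosh (δ * (w - π / 2 * I))).re := by
  set ζ : ℂ := δ * (w - π / 2 * I)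
  have hre : ζ.re = δ * w.re := by simp [ζ]
  have him : ζ.im = δ * (w.im - π / 2) := by simp [ζ]
  have him_le : |ζ.im| ≤ δ * π / 2 := by
    have : |w.im - π / 2| ≤ π / 2 := abs_le.2 ⟨by linarith [hw.1], by linarith [hw.2]⟩
    rw [him, abs_mul, abs_of_nonneg hδ.1]
    nlinarith [hδ.1]
  have hnorm : δ * ‖w‖ ≤ δ * π + |ζ.re| := by
    have : ‖w‖ ≤ π + |w.re| := by
      linarith [norm_le_abs_re_add_abs_im w, abs_of_nonneg hw.1, hw.2]
    rw [hre, abs_mul, abs_of_nonneg hδ.1]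
    nlinarith [hδ.1]
  calc Real.cos (δ * π / 2) * Real.exp (δ * ‖w‖)
      ≤ Real.exp (δ * π) * (Real.cos (δ * π / 2) * Real.exp |ζ.re|) := by
        rw [mul_left_comm, ← Real.exp_add]
        exact mul_le_mul_of_nonneg_left (Real.exp_le_exp.2 hnorm) <| Real.cos_nonneg_of_mem_Icc
          ⟨by nlinarith [Real.pi_pos, hδ.1], by nlinarith [Real.pi_pos, hδ.2]⟩
    _ ≤ _ := mul_le_mul_of_nonneg_left
        (cos_mul_exp_abs_re_le_re_two_mul_cosh him_le (by nlinarith [Real.pi_pos, hδ.2]))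
        (Real.exp_pos _).le

theorem Real.rpow_le_mul_exp {δ p t : ℝ} (hδ : 0 < δ) (hp : 0 < p) (ht : 0 ≤ t) :
    t ^ p ≤ (p / δ) ^ p * Real.exp (δ * t) := by
  have hs : 0 ≤ δ * t / p := by positivity
  calc t ^ p = (p / δ) ^ p * (δ * t / p) ^ p := by
        rw [← Real.mul_rpow (by positivity) hs]
        congr 1
        field_simp
    _ ≤ (p / δ) ^ p * Real.exp (δ * t / p) ^ p := by
        gcongr
        linarith [Real.add_one_le_exp (δ * t / p)]
    _ = (p / δ) ^ p * Real.exp (δ * t) := by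
        rw [← Real.exp_mul, div_mul_cancel₀ _ hp.ne']

theorem stmt_16 (f : ℂ → ℂ)
    (hdiff : DifferentiableOn ℂ f {z : ℂ | 0 < z.im})
    (him : ∀ z : ℂ, 0 < z.im → (f z).im ∈ Set.Icc (0 : ℝ) Real.pi)
    (g : ℝ → ℂ)
    (hbdry : ∀ᵐ x : ℝ, Tendsto (fun y : ℝ => f ((x : ℂ) + (y : ℂ) * Complex.I))
      (nhdsWithin 0 (Set.Ioi 0)) (nhds (g x))) :
    ∀ δ ∈ Set.Ioo (0 : ℝ) 1,
      Integrable (fun x : ℝ => Real.exp (δ * ‖g x‖) / (1 + x ^ 2)) ∧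
      ∀ p : ℝ, 0 < p → Integrable (fun x : ℝ => ‖g x‖ ^ p / (1 + x ^ 2)) := by
  intro δ hδ
  set Φ : ℂ → ℂ := fun w => 2 * cosh (δ * (w - π / 2 * I))
  set c := Real.cos (δ * π / 2)
  have hc : 0 < c := Real.cos_pos_of_mem_Ioo
    ⟨by nlinarith [Real.pi_pos, hδ.1], by nlinarith [Real.pi_pos, hδ.2]⟩
  have hΦ : ∀ w : ℂ, w.im ∈ Icc 0 π → Real.exp (δ * ‖w‖) ≤ Real.exp (δ * π) / c * (Φ w).re :=
    fun w hw => by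
      rw [div_mul_eq_mul_div, le_div_iff₀ hc, mul_comm]
      exact cos_mul_exp_mul_norm_le_re_two_mul_cosh (Ioo_subset_Icc_self hδ) hw
  have hΦ_re : ∀ w : ℂ, w.im ∈ Icc 0 π → 0 ≤ (Φ w).re := fun w hw =>
    (pos_of_mul_pos_right ((Real.exp_pos _).trans_le (hΦ w hw)) (by positivity)).le
  have hg_im : ∀ᵐ x : ℝ, (g x).im ∈ Icc 0 π := hbdry.mono fun x hx =>
    isClosed_Icc.mem_of_tendsto ((continuous_im.tendsto _).comp hx)
      (eventually_nhdsWithin_of_forall fun y (hy : 0 < y) => him _ (by simpa using hy))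
  have hint := integrable_re_div_one_add_sq_of_tendsto (f := Φ ∘ f) (g := Φ ∘ g)
    ((by fun_prop : Differentiable ℂ Φ).comp_differentiableOn hdiff)
    (fun z hz => hΦ_re _ (him z hz))
    (hbdry.mono fun x hx => ((by fun_prop : Continuous Φ).tendsto _).comp hx)
  have hmeas : AEMeasurable g := aemeasurable_of_tendsto_vertical hdiff.continuousOn hbdry
  have hexp : Integrable fun x : ℝ => Real.exp (δ * ‖g x‖) / (1 + x ^ 2) := by
    refine (hint.const_mul (Real.exp (δ * π) / c)).mono' (AEMeasurable.aestronglyMeasurable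
      (by fun_prop : AEMeasurable fun x : ℝ => Real.exp (δ * ‖g x‖) / (1 + x ^ 2)))
      (hg_im.mono fun x hx => ?_)
    rw [Real.norm_of_nonneg (by positivity), ← mul_div_assoc]
    exact div_le_div_of_nonneg_right (hΦ _ hx) (by positivity)
  refine ⟨hexp, fun p hp => (hexp.const_mul ((p / δ) ^ p)).mono'
    (by fun_prop : AEMeasurable fun x : ℝ => ‖g x‖ ^ p / (1 + x ^ 2)).aestronglyMeasurable
    (ae_of_all _ fun x => ?_)⟩
  rw [Real.norm_of_nonneg (by positivity), ← mul_div_assoc]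
  exact div_le_div_of_nonneg_right (Real.rpow_le_mul_exp hδ.1 hp (norm_nonneg _)) (by positivity)
end
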